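/- arXiv:1605.03748 — 2 statements merged into one kernel-verified Lean document; each statement's English description precedes it below -/
import Mathlib

section
/- As formal Laurent series in s, one has 1/((1 - e^s)(1 - e^{-2s})) = -(1/2)(d/ds)(1/(1 - e^s)) + (1/2)·1/(1 - e^{-2s}) - (1/2)·1/(1 - e^{-s}). -/
/-!
Multiplied by `s²`, everything is a power series in `F = s/(1-eˢ)`: the series `1/(1-e^{cs})` is
`(rescale c F)/(cs)`, and differentiating `F (1-eˢ) = s` gives `F' (1-eˢ) = 1 + F eˢ`. Using these
relations together with `e⁻ˢ eˢ = 1` and `(e⁻ˢ)² = e⁻²ˢ`, the right-hand side times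
`(1-eˢ)(1-e⁻²ˢ)` is `s²`, as is `G` times it; this factor is nonzero, and `ℚ⟦X⟧` is a domain.
-/

open PowerSeries

namespace PowerSeries

variable {A : Type*} [CommRing A] [Algebra ℚ A]

theorem one_sub_rescale_exp_ne_zero {a : A} (ha : a ≠ 0) : 1 - rescale a (exp A) ≠ 0 :=
  fun h => ha (by simpa [coeff_rescale] using congrArg (coeff 1) h)

theorem rescale_neg_exp_mul_rescale_exp (a : A) :
    rescale (-a) (exp A) * rescale a (exp A) = 1 := by
  rw [exp_mul_exp_eq_exp_add, neg_add_cancel, rescale_zero]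
  simp

theorem derivative_mul_one_sub_exp {F : A⟦X⟧} (hF : F * (1 - exp A) = X) :
    d⁄dX A F * (1 - exp A) = 1 + F * exp A := by
  have h := congrArg (d⁄dX A) hF
  rw [Derivation.leibniz, map_sub, Derivation.map_one_eq_zero, derivative_exp, derivative_X,
    smul_eq_mul, smul_eq_mul] at h
  linear_combination h

theorem rescale_mul_one_sub_rescale_exp {F : A⟦X⟧} (hF : F * (1 - exp A) = X) (a : A) :
    rescale a F * (1 - rescale a (exp A)) = C a * X := by
  rw [← rescale_X, ← hF, map_mul, map_sub, map_one]

end PowerSeries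

theorem beta_two_rhs_mul_denominator {F : ℚ⟦X⟧} (hF : F * (1 - exp ℚ) = X) :
    (C (1 / 2) * (F - X * d⁄dX ℚ F) - C (1 / 4) * (X * rescale (-2) F)
      + C (1 / 2) * (X * rescale (-1) F)) * ((1 - exp ℚ) * (1 - rescale (-2) (exp ℚ))) = X ^ 2 := by
  have hFp := derivative_mul_one_sub_exp hF
  have hF1 := rescale_mul_one_sub_rescale_exp hF (-1)
  have hF2 := rescale_mul_one_sub_rescale_exp hF (-2)
  have he : rescale (-1) (exp ℚ) * exp ℚ = 1 := by
    simpa using rescale_neg_exp_mul_rescale_exp (1 : ℚ)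
  have he2 : rescale (-1) (exp ℚ) * rescale (-1) (exp ℚ) = rescale (-2) (exp ℚ) := by
    rw [exp_mul_exp_eq_exp_add]; norm_num
  have hhalf : C (1 / 2 : ℚ) * 2 = 1 := by rw [← map_ofNat C 2, ← map_mul]; norm_num
  have hquarter : C (1 / 4 : ℚ) * 4 = 1 := by rw [← map_ofNat C 4, ← map_mul]; norm_num
  simp only [map_neg, map_one, map_ofNat] at hF1 hF2
  set E := exp ℚ
  set e := rescale (-1 : ℚ) E
  set E2 := rescale (-2 : ℚ) E
  set c := C (1 / 2 : ℚ)
  set d := C (1 / 4 : ℚ)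
  set F1 := rescale (-1 : ℚ) F
  set F2 := rescale (-2 : ℚ) F
  linear_combination (c * (X * (1 + e) + (1 - E2))) * hF - (c * X * (1 - E2)) * hFp
      + (c * X * (1 - E) * (1 + e)) * hF1 - (d * X * (1 - E)) * hF2
      + (c * (X * F + X * F * e + X ^ 2)) * he + (c * (X * (1 - E) * F1 - X * F * E)) * he2
      + (X ^ 2 * (2 * d * E + 1 - 2 * d)) * hhalf + (c * X ^ 2 * (1 - E)) * hquarter

/-- The Laurent series identity
`1/((1-e^s)(1-e^{-2s})) = -(1/2)(d/ds)(1/(1-e^s)) + (1/2)/(1-e^{-2s}) - (1/2)/(1-e^{-s})`,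
multiplied through by `s²` to give an identity of formal power series: writing
`F = s/(1-e^s)` (so `1/(1-e^{cs}) = (rescale c F)/(cs)`) and
`G = s²/((1-e^s)(1-e^{-2s}))`, the identity becomes
`G = (1/2)(F - s F') - (1/4) s·(rescale (-2) F) + (1/2) s·(rescale (-1) F)`. -/
theorem laurent_beta_two_identity (F G : PowerSeries ℚ)
    (hF : F * (1 - PowerSeries.exp ℚ) = PowerSeries.X)
    (hG : G * ((1 - PowerSeries.exp ℚ) *
        (1 - PowerSeries.rescale (-2) (PowerSeries.exp ℚ))) = PowerSeries.X ^ 2) :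
    G = PowerSeries.C (R := ℚ) (1 / 2) * (F - PowerSeries.X * PowerSeries.derivative ℚ F)
      - PowerSeries.C (R := ℚ) (1 / 4) * (PowerSeries.X * PowerSeries.rescale (-2) F)
      + PowerSeries.C (R := ℚ) (1 / 2) * (PowerSeries.X * PowerSeries.rescale (-1) F) := by
  have hE : (1 - exp ℚ) ≠ 0 := by simpa using one_sub_rescale_exp_ne_zero (one_ne_zero (α := ℚ))
  have hE2 := one_sub_rescale_exp_ne_zero (A := ℚ) (a := -2) (by norm_num)
  exact mul_right_cancel₀ (mul_ne_zero hE hE2) (hG.trans (beta_two_rhs_mul_denominator hF).symm)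
end

section
/- Define χ_n(β) for n ≥ 1 by χ_n(β) = (n-1)! ∑_{k=0}^{n+2} ((-1)^{k-1} B_k B_{n+2-k})/(k!(n+2-k)!) β^{k - n/2 - 1}, with Bernoulli numbers in the convention s/(1-e^s) = -∑ B_m s^m/m!. Then at β = 1, χ_n(1) = 0 for n odd, and for n = 2g - 2 with g ≥ 2, χ_{2g-2}(1) = B_{2g}/(2g(2g-2)). -/
/-!
At `β = 1` the sum is minus the coefficient of `s^(n+2)` in `f(-s) f(s)`, where
`f(s) = s/(eˢ-1) = ∑ B_m s^m/m!`. Since `f(-s) = f(s) + s` and `f² = f - s f - s f'`, this product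
is `f - s f'`, whose `m`-th coefficient is `(1 - m) B_m/m!`. Hence `χ_n(1) = B_{n+2}/(n(n+2))`,
which vanishes for odd `n` because so do the odd Bernoulli numbers beyond `B_1`.
-/

/-- The parameterized Euler characters
`χ_n(β) = (n-1)! ∑_{k=0}^{n+2} ((-1)^{k-1} B_k B_{n+2-k})/(k!(n+2-k)!) β^{k-n/2-1}`
for `n ≥ 1`. -/
noncomputable def parEuler (B : ℕ → ℚ) (β : ℝ) (n : ℕ) : ℝ :=
  ((n - 1).factorial : ℝ) *
    ∑ k ∈ Finset.range (n + 3),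
      (-1 : ℝ) ^ ((k : ℤ) - 1) * (B k : ℝ) * (B (n + 2 - k) : ℝ)
        / ((k.factorial : ℝ) * ((n + 2 - k).factorial : ℝ))
        * β ^ ((k : ℝ) - (n : ℝ) / 2 - 1)

open PowerSeries Finset

theorem PowerSeries.exp_sub_one_ne_zero (A : Type*) [CommRing A] [Algebra ℚ A] [Nontrivial A] :
    exp A - 1 ≠ 0 := fun h => by
  simpa [coeff_exp] using congrArg (coeff 1) h

theorem eq_bernoulli_of_mk_mul_one_sub_exp {B : ℕ → ℚ}
    (hB : mk (fun m => -(B m / m.factorial)) * (1 - exp ℚ) = X) : B = bernoulli := by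
  have hneg : mk (fun m => B m / m.factorial) = -mk (fun m => -(B m / m.factorial)) := by
    ext m
    simp
  have hmk : mk (fun m => B m / m.factorial) = bernoulliPowerSeries ℚ := by
    refine mul_right_cancel₀ (exp_sub_one_ne_zero ℚ) ?_
    rw [bernoulliPowerSeries_mul_exp_sub_one, ← hB, hneg, neg_mul, ← mul_neg, neg_sub]
  funext m
  simpa [bernoulliPowerSeries, m.factorial_ne_zero] using congrArg (coeff m) hmk

/-- With `f(s) = s/(eˢ-1)`, so that `f(-s) = s + f(s)`, this is the Riccati equation
`f² = f - s f - s f'`. -/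
theorem bernoulli'PowerSeries_mul_bernoulliPowerSeries :
    bernoulli'PowerSeries ℚ * bernoulliPowerSeries ℚ
      = bernoulliPowerSeries ℚ - X * d⁄dX ℚ (bernoulliPowerSeries ℚ) := by
  have hB' := bernoulli'PowerSeries_mul_exp_sub_one ℚ
  have hB := bernoulliPowerSeries_mul_exp_sub_one ℚ
  have hdB : d⁄dX ℚ (bernoulliPowerSeries ℚ) * (exp ℚ - 1)
      + bernoulliPowerSeries ℚ * exp ℚ = 1 := by
    have := congrArg (d⁄dX ℚ) hB
    simp only [Derivation.leibniz, map_sub, derivative_exp, Derivation.map_one_eq_zero, sub_zero,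
      derivative_X, smul_eq_mul] at this
    linear_combination this
  refine mul_right_cancel₀ (pow_ne_zero 2 (exp_sub_one_ne_zero ℚ)) ?_
  linear_combination (bernoulliPowerSeries ℚ * (exp ℚ - 1)) * hB'
    - (exp ℚ - 1) * hB + (X * (exp ℚ - 1)) * hdB

theorem sum_bernoulli'_mul_bernoulli_div_factorial (m : ℕ) :
    ∑ k ∈ range (m + 1), bernoulli' k * bernoulli (m - k) / (k.factorial * (m - k).factorial)
      = (1 - m) * bernoulli m / m.factorial := by
  have h := congrArg (coeff m) bernoulli'PowerSeries_mul_bernoulliPowerSeries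
  rw [coeff_mul, Nat.sum_antidiagonal_eq_sum_range_succ_mk, map_sub] at h
  have hX : coeff m (X * d⁄dX ℚ (bernoulliPowerSeries ℚ)) = m * (bernoulli m / m.factorial) := by
    cases m with
    | zero => simp
    | succ j =>
      rw [coeff_succ_X_mul, coeff_derivative]
      simp [bernoulliPowerSeries, mul_comm]
  rw [hX] at h
  simp only [bernoulli'PowerSeries, bernoulliPowerSeries, coeff_mk,
    Algebra.algebraMap_self, RingHom.id_apply] at h
  rw [show (1 - (m : ℚ)) * bernoulli m / m.factorial
      = bernoulli m / m.factorial - m * (bernoulli m / m.factorial) by ring, ← h]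
  refine sum_congr rfl fun k _ => ?_
  field_simp

theorem neg_one_zpow_natCast_sub_one {α : Type*} [DivisionRing α] (k : ℕ) :
    (-1 : α) ^ ((k : ℤ) - 1) = -(-1) ^ k := by
  rw [zpow_sub_one₀ (by norm_num), zpow_natCast]
  simp

theorem parEuler_bernoulli_one {n : ℕ} (hn : 1 ≤ n) :
    parEuler bernoulli 1 n = bernoulli (n + 2) / (n * (n + 2)) := by
  have hsum : ∑ k ∈ range (n + 3), (-1 : ℝ) ^ ((k : ℤ) - 1) * (bernoulli k : ℝ)
        * (bernoulli (n + 2 - k) : ℝ) / ((k.factorial : ℝ) * ((n + 2 - k).factorial : ℝ))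
        * (1 : ℝ) ^ ((k : ℝ) - (n : ℝ) / 2 - 1)
      = -(((1 - (n + 2 : ℕ)) * bernoulli (n + 2) / (n + 2).factorial : ℚ) : ℝ) := by
    rw [← sum_bernoulli'_mul_bernoulli_div_factorial, Rat.cast_sum, ← sum_neg_distrib]
    refine sum_congr rfl fun k _ => ?_
    rw [Real.one_rpow, mul_one, neg_one_zpow_natCast_sub_one, bernoulli'_eq_bernoulli]
    push_cast
    ring
  obtain ⟨p, rfl⟩ := Nat.exists_eq_add_of_le' hn
  rw [parEuler, hsum, Nat.add_sub_cancel, show p + 1 + 2 = p + 3 by ring]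
  push_cast [Nat.factorial_succ]
  field_simp
  ring

/-- At `β = 1`: `χ_n(1) = 0` for `n` odd, and `χ_{2g-2}(1) = B_{2g}/(2g(2g-2))` for `g ≥ 2`,
with Bernoulli numbers in the convention `s/(1-e^s) = -∑ B_m s^m/m!`. -/
theorem parEuler_unrefined (B : ℕ → ℚ)
    (hB : (PowerSeries.mk fun m => -(B m / (m.factorial : ℚ))) *
        (1 - PowerSeries.exp ℚ) = PowerSeries.X) :
    (∀ n, 1 ≤ n → Odd n → parEuler B 1 n = 0)
    ∧ ∀ g : ℕ, 2 ≤ g →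
        parEuler B 1 (2 * g - 2)
          = (B (2 * g) : ℝ) / ((2 * g : ℝ) * ((2 * g : ℝ) - 2)) := by
  obtain rfl := eq_bernoulli_of_mk_mul_one_sub_exp hB
  refine ⟨fun n hn hodd => ?_, fun g hg => ?_⟩
  · rw [parEuler_bernoulli_one hn, bernoulli_eq_zero_of_odd (hodd.add_even even_two) (by omega)]
    simp
  · obtain ⟨k, rfl⟩ := Nat.exists_eq_add_of_le' hg
    rw [show 2 * (k + 2) - 2 = 2 * k + 2 by omega, parEuler_bernoulli_one (by omega),
      show 2 * k + 2 + 2 = 2 * (k + 2) by ring]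
    push_cast
    ring
end
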